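/- In the prescription system for subsystem 2, with a nesting map ρ³_ℓ : 𝒵²_ℓ → 𝒵³_ℓ and a fixed subsystem-3 strategy ĝ³ assigning u³_t = ĝ³_t(ρ³(z²_1), …, ρ³(z²_t)), consider subsystem-2 strategies assigning to each t and history (z²_{1:t}, (γ, u²)_{0:t−1}) a complete action θ_t = (γ_t, u²_t), with worst-case cost J²(·) := max over realizations (x̂_0 ∈ X̂₀, w_{0:T−1}) of d̂(x̂_T). Then the minimum of J² over all such strategies equals the minimum over structured strategies of the form θ_t = φ_t(P²_t(z²_{1:t}, γ_{0:t−1}, u²_{0:t−1}, u³_{0:t−1}), ρ³(z²_1), …, ρ³(z²_t)); equivalently, for every strategy there is a structured strategy of this form with no larger worst-case cost. -/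
import Mathlib


/-- The prescription system for subsystem 2. -/
structure Pres2 where
  T : ℕ
  hT : 1 ≤ T
  X : ℕ → Type
  U1 : ℕ → Type
  U2 : ℕ → Type
  U3 : ℕ → Type
  W : ℕ → Type
  Z1 : ℕ → Type
  Z2 : ℕ → Type
  f : ∀ t, X t → U1 t → U2 t → U3 t → W t → X (t+1)
  h1 : ∀ t, X t → U1 t → U2 t → U3 t → Z1 (t+1)
  h2 : ∀ t, X t → U1 t → U2 t → U3 t → Z2 (t+1)
  ftil1 : ∀ t, Set (X t) → (U1 t × U2 t × U3 t) → Z1 (t+1) → Set (X (t+1))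
  X0 : Set (X 0)
  X0ne : X0.Nonempty
  Xfin : ∀ t, Finite (X t)
  Xne : ∀ t, Nonempty (X t)
  U1fin : ∀ t, Finite (U1 t)
  U1ne : ∀ t, Nonempty (U1 t)
  U2fin : ∀ t, Finite (U2 t)
  U2ne : ∀ t, Nonempty (U2 t)
  U3fin : ∀ t, Finite (U3 t)
  U3ne : ∀ t, Nonempty (U3 t)
  Wfin : ∀ t, Finite (W t)
  Wne : ∀ t, Nonempty (W t)
  Z1fin : ∀ t, Finite (Z1 t)
  Z1ne : ∀ t, Nonempty (Z1 t)
  Z2fin : ∀ t, Finite (Z2 t)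
  Z2ne : ∀ t, Nonempty (Z2 t)

namespace Pres2

variable (S : Pres2)

/-- Open-loop pair trajectory `(x̂_t, P¹_t)` generated by prescriptions `γ` and
actions `u2`, `u3`. -/
def ol2 (γ : ∀ s, Set (S.X s) → S.U1 s) (u2 : ∀ s, S.U2 s) (u3 : ∀ s, S.U3 s)
    (x0 : S.X 0) (w : ∀ s, S.W s) : ∀ t : ℕ, S.X t × Set (S.X t)
  | 0 => (x0, S.X0)
  | t+1 =>
    let p := ol2 γ u2 u3 x0 w t
    let u1 := γ t p.2
    (S.f t p.1 u1 (u2 t) (u3 t) (w t),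
     S.ftil1 t p.2 (u1, u2 t, u3 t) (S.h1 t p.1 u1 (u2 t) (u3 t)))

/-- The subsystem-2 information state
`P²_t(z²_{1:t}, γ_{0:t-1}, u²_{0:t-1}, u³_{0:t-1})`. -/
def P2 (t : ℕ) (z : ∀ ℓ : Fin t, S.Z2 (ℓ.1+1))
    (γ : ∀ ℓ : Fin t, Set (S.X ℓ.1) → S.U1 ℓ.1)
    (u2 : ∀ ℓ : Fin t, S.U2 ℓ.1) (u3 : ∀ ℓ : Fin t, S.U3 ℓ.1) :
    Set (S.X t × Set (S.X t)) :=
  {q | ∃ (γf : ∀ s, Set (S.X s) → S.U1 s) (u2f : ∀ s, S.U2 s) (u3f : ∀ s, S.U3 s),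
    (∀ ℓ : Fin t, γf ℓ.1 = γ ℓ ∧ u2f ℓ.1 = u2 ℓ ∧ u3f ℓ.1 = u3 ℓ) ∧
    ∃ x0 ∈ S.X0, ∃ w : ∀ s, S.W s,
      (∀ ℓ : Fin t,
        S.h2 ℓ.1 (S.ol2 γf u2f u3f x0 w ℓ.1).1
          (γf ℓ.1 (S.ol2 γf u2f u3f x0 w ℓ.1).2) (u2f ℓ.1) (u3f ℓ.1) = z ℓ) ∧
      S.ol2 γf u2f u3f x0 w t = q}

end Pres2

namespace Pres2

variable (S : Pres2)

/-- A subsystem-2 strategy: it assigns to each history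
`(z²_{1:t}, γ_{0:t-1}, u²_{0:t-1})` a complete action `θ_t = (γ_t, u²_t)`. -/
def Sig := ∀ t : ℕ, (∀ ℓ : Fin t, S.Z2 (ℓ.1+1)) →
    (∀ ℓ : Fin t, Set (S.X ℓ.1) → S.U1 ℓ.1) → (∀ ℓ : Fin t, S.U2 ℓ.1) →
    (Set (S.X t) → S.U1 t) × S.U2 t

variable (Z3 : ℕ → Type) (rho3 : ∀ ℓ, S.Z2 ℓ → Z3 ℓ)
variable (g3 : ∀ t : ℕ, (∀ ℓ : Fin t, Z3 (ℓ.1+1)) → S.U3 t)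

/-- The subsystem-3 action prefix induced by the fixed strategy `ĝ³` from a
`z²`-observation history via the nesting map `ρ³`. -/
def u3ofZ (t : ℕ) (z : ∀ ℓ : Fin t, S.Z2 (ℓ.1+1)) : ∀ ℓ : Fin t, S.U3 ℓ.1 :=
  fun ℓ => g3 ℓ.1 (fun j : Fin ℓ.1 => rho3 (j.1+1) (z ⟨j.1, j.2.trans ℓ.2⟩))

/-- Closed-loop trajectory of the subsystem-2 prescription system under a
strategy `σ`: it carries `(x̂_t, P¹_t)` and the histories of `z²`, `γ`, `u²`. -/
def cl2 (σ : S.Sig) (x0 : S.X 0) (w : ∀ s, S.W s) :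
    ∀ t : ℕ, (S.X t × Set (S.X t)) × (∀ ℓ : Fin t, S.Z2 (ℓ.1+1)) ×
      (∀ ℓ : Fin t, Set (S.X ℓ.1) → S.U1 ℓ.1) × (∀ ℓ : Fin t, S.U2 ℓ.1)
  | 0 => ((x0, S.X0), fun i => i.elim0, fun i => i.elim0, fun i => i.elim0)
  | t+1 =>
    let p := cl2 σ x0 w t
    let θ := σ t p.2.1 p.2.2.1 p.2.2.2
    let u3 := g3 t (fun ℓ => rho3 (ℓ.1+1) (p.2.1 ℓ))
    let u1 := θ.1 p.1.2
    ((S.f t p.1.1 u1 θ.2 u3 (w t),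
      S.ftil1 t p.1.2 (u1, θ.2, u3) (S.h1 t p.1.1 u1 θ.2 u3)),
     Fin.snoc (α := fun ℓ : Fin (t+1) => S.Z2 (ℓ.1+1)) p.2.1
       (S.h2 t p.1.1 u1 θ.2 u3),
     Fin.snoc (α := fun ℓ : Fin (t+1) => Set (S.X ℓ.1) → S.U1 ℓ.1) p.2.2.1 θ.1,
     Fin.snoc (α := fun ℓ : Fin (t+1) => S.U2 ℓ.1) p.2.2.2 θ.2)

/-- Worst-case cost of a subsystem-2 strategy, for terminal cost `dT`. -/
noncomputable def J2 (dT : S.X S.T → ℝ) (σ : S.Sig) : ℝ :=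
  sSup {r | ∃ x0 ∈ S.X0, ∃ w : ∀ s, S.W s, r = dT (S.cl2 Z3 rho3 g3 σ x0 w S.T).1.1}

/-- A subsystem-2 strategy is structured if it depends on the history only
through the information state `P²_t` and `(ρ³(z²_1), …, ρ³(z²_t))`. -/
def Structured2 (σ : S.Sig) : Prop :=
  ∃ φ : ∀ t, Set (S.X t × Set (S.X t)) → (∀ ℓ : Fin t, Z3 (ℓ.1+1)) →
      (Set (S.X t) → S.U1 t) × S.U2 t,
    ∀ (t : ℕ) (z : ∀ ℓ : Fin t, S.Z2 (ℓ.1+1))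
      (γ : ∀ ℓ : Fin t, Set (S.X ℓ.1) → S.U1 ℓ.1) (u2 : ∀ ℓ : Fin t, S.U2 ℓ.1),
      σ t z γ u2 =
        φ t (S.P2 t z γ u2 (S.u3ofZ Z3 rho3 g3 t z)) (fun ℓ => rho3 (ℓ.1+1) (z ℓ))

end Pres2

namespace Pres2

variable (S : Pres2) (Z3 : ℕ → Type) (rho3 : ∀ ℓ, S.Z2 ℓ → Z3 ℓ)
  (g3 : ∀ t : ℕ, (∀ ℓ : Fin t, Z3 (ℓ.1+1)) → S.U3 t)
  (τ : S.Sig) (x0 : S.X 0) (w : ∀ s, S.W s)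

/-- state along closed loop -/
def stC (t : ℕ) : S.X t × Set (S.X t) := (S.cl2 Z3 rho3 g3 τ x0 w t).1
def hzC (t : ℕ) : ∀ ℓ : Fin t, S.Z2 (ℓ.1+1) := (S.cl2 Z3 rho3 g3 τ x0 w t).2.1
def hgC (t : ℕ) : ∀ ℓ : Fin t, Set (S.X ℓ.1) → S.U1 ℓ.1 :=
  (S.cl2 Z3 rho3 g3 τ x0 w t).2.2.1
def huC (t : ℕ) : ∀ ℓ : Fin t, S.U2 ℓ.1 := (S.cl2 Z3 rho3 g3 τ x0 w t).2.2.2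
def thC (t : ℕ) : (Set (S.X t) → S.U1 t) × S.U2 t :=
  τ t (hzC S Z3 rho3 g3 τ x0 w t) (hgC S Z3 rho3 g3 τ x0 w t) (huC S Z3 rho3 g3 τ x0 w t)
def u3C (t : ℕ) : S.U3 t :=
  g3 t (fun j => rho3 (j.1+1) (hzC S Z3 rho3 g3 τ x0 w t j))
def zC (t : ℕ) : S.Z2 (t+1) :=
  S.h2 t (stC S Z3 rho3 g3 τ x0 w t).1
    ((thC S Z3 rho3 g3 τ x0 w t).1 (stC S Z3 rho3 g3 τ x0 w t).2)
    (thC S Z3 rho3 g3 τ x0 w t).2 (u3C S Z3 rho3 g3 τ x0 w t)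

lemma stC_succ (t : ℕ) : stC S Z3 rho3 g3 τ x0 w (t+1) =
    (S.f t (stC S Z3 rho3 g3 τ x0 w t).1
      ((thC S Z3 rho3 g3 τ x0 w t).1 (stC S Z3 rho3 g3 τ x0 w t).2)
      (thC S Z3 rho3 g3 τ x0 w t).2 (u3C S Z3 rho3 g3 τ x0 w t) (w t),
     S.ftil1 t (stC S Z3 rho3 g3 τ x0 w t).2
      ((thC S Z3 rho3 g3 τ x0 w t).1 (stC S Z3 rho3 g3 τ x0 w t).2,
       (thC S Z3 rho3 g3 τ x0 w t).2, u3C S Z3 rho3 g3 τ x0 w t)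
      (S.h1 t (stC S Z3 rho3 g3 τ x0 w t).1
        ((thC S Z3 rho3 g3 τ x0 w t).1 (stC S Z3 rho3 g3 τ x0 w t).2)
        (thC S Z3 rho3 g3 τ x0 w t).2 (u3C S Z3 rho3 g3 τ x0 w t))) := rfl

lemma hzC_succ (t : ℕ) : hzC S Z3 rho3 g3 τ x0 w (t+1) =
    Fin.snoc (α := fun ℓ : Fin (t+1) => S.Z2 (ℓ.1+1)) (hzC S Z3 rho3 g3 τ x0 w t)
      (zC S Z3 rho3 g3 τ x0 w t) := rfl

lemma hgC_succ (t : ℕ) : hgC S Z3 rho3 g3 τ x0 w (t+1) =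
    Fin.snoc (α := fun ℓ : Fin (t+1) => Set (S.X ℓ.1) → S.U1 ℓ.1)
      (hgC S Z3 rho3 g3 τ x0 w t) (thC S Z3 rho3 g3 τ x0 w t).1 := rfl

lemma huC_succ (t : ℕ) : huC S Z3 rho3 g3 τ x0 w (t+1) =
    Fin.snoc (α := fun ℓ : Fin (t+1) => S.U2 ℓ.1)
      (huC S Z3 rho3 g3 τ x0 w t) (thC S Z3 rho3 g3 τ x0 w t).2 := rfl

end Pres2
namespace Pres2

variable (S : Pres2) (Z3 : ℕ → Type) (rho3 : ∀ ℓ, S.Z2 ℓ → Z3 ℓ)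
  (g3 : ∀ t : ℕ, (∀ ℓ : Fin t, Z3 (ℓ.1+1)) → S.U3 t)
  (τ : S.Sig) (x0 : S.X 0) (w : ∀ s, S.W s)

lemma hzC_lt : ∀ (t : ℕ) (ℓ : Fin t),
    hzC S Z3 rho3 g3 τ x0 w t ℓ = zC S Z3 rho3 g3 τ x0 w ℓ.1
  | 0, ℓ => ℓ.elim0
  | t+1, ℓ => by
    rw [hzC_succ]
    induction ℓ using Fin.lastCases with
    | last => rw [Fin.snoc_last]; rfl
    | cast i => rw [Fin.snoc_castSucc]; exact hzC_lt t i

lemma hgC_lt : ∀ (t : ℕ) (ℓ : Fin t),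
    hgC S Z3 rho3 g3 τ x0 w t ℓ = (thC S Z3 rho3 g3 τ x0 w ℓ.1).1
  | 0, ℓ => ℓ.elim0
  | t+1, ℓ => by
    rw [hgC_succ]
    induction ℓ using Fin.lastCases with
    | last => rw [Fin.snoc_last]; rfl
    | cast i => rw [Fin.snoc_castSucc]; exact hgC_lt t i

lemma huC_lt : ∀ (t : ℕ) (ℓ : Fin t),
    huC S Z3 rho3 g3 τ x0 w t ℓ = (thC S Z3 rho3 g3 τ x0 w ℓ.1).2
  | 0, ℓ => ℓ.elim0
  | t+1, ℓ => by
    rw [huC_succ]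
    induction ℓ using Fin.lastCases with
    | last => rw [Fin.snoc_last]; rfl
    | cast i => rw [Fin.snoc_castSucc]; exact huC_lt t i

lemma u3ofZ_lt (t : ℕ) (ℓ : Fin t) :
    S.u3ofZ Z3 rho3 g3 t (hzC S Z3 rho3 g3 τ x0 w t) ℓ = u3C S Z3 rho3 g3 τ x0 w ℓ.1 := by
  unfold u3ofZ u3C
  congr 1
  funext j
  rw [hzC_lt, hzC_lt]

end Pres2
namespace Pres2

variable (S : Pres2) (Z3 : ℕ → Type) (rho3 : ∀ ℓ, S.Z2 ℓ → Z3 ℓ)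
  (g3 : ∀ t : ℕ, (∀ ℓ : Fin t, Z3 (ℓ.1+1)) → S.U3 t)
  (τ : S.Sig) (x0 : S.X 0) (w : ∀ s, S.W s)

lemma ol2_congr (γ1 γ2 : ∀ s, Set (S.X s) → S.U1 s) (u21 u22 : ∀ s, S.U2 s)
    (u31 u32 : ∀ s, S.U3 s) (w1 w2 : ∀ s, S.W s) :
    ∀ t, (∀ s, s < t → γ1 s = γ2 s ∧ u21 s = u22 s ∧ u31 s = u32 s ∧ w1 s = w2 s) →
      S.ol2 γ1 u21 u31 x0 w1 t = S.ol2 γ2 u22 u32 x0 w2 t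
  | 0, _ => rfl
  | t+1, h => by
    have ih := ol2_congr γ1 γ2 u21 u22 u31 u32 w1 w2 t
      (fun s hs => h s (hs.trans (Nat.lt_succ_self t)))
    obtain ⟨e1, e2, e3, e4⟩ := h t (Nat.lt_succ_self t)
    show (_, _) = (_, _)
    rw [show S.ol2 γ1 u21 u31 x0 w1 t = S.ol2 γ2 u22 u32 x0 w2 t from ih, e1, e2, e3, e4]

lemma cl2_w_congr (w1 w2 : ∀ s, S.W s) :
    ∀ t, (∀ s, s < t → w1 s = w2 s) →
      S.cl2 Z3 rho3 g3 τ x0 w1 t = S.cl2 Z3 rho3 g3 τ x0 w2 t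
  | 0, _ => rfl
  | t+1, h => by
    have ih := cl2_w_congr w1 w2 t (fun s hs => h s (hs.trans (Nat.lt_succ_self t)))
    show (_, _, _, _) = (_, _, _, _)
    rw [show S.cl2 Z3 rho3 g3 τ x0 w1 t = S.cl2 Z3 rho3 g3 τ x0 w2 t from ih,
      h t (Nat.lt_succ_self t)]

lemma ol2_eq_stC (γf : ∀ s, Set (S.X s) → S.U1 s) (u2f : ∀ s, S.U2 s)
    (u3f : ∀ s, S.U3 s) (t : ℕ)
    (hm : ∀ s, s < t → γf s = (thC S Z3 rho3 g3 τ x0 w s).1 ∧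
      u2f s = (thC S Z3 rho3 g3 τ x0 w s).2 ∧ u3f s = u3C S Z3 rho3 g3 τ x0 w s) :
    ∀ s, s ≤ t → S.ol2 γf u2f u3f x0 w s = stC S Z3 rho3 g3 τ x0 w s
  | 0, _ => rfl
  | s+1, hs => by
    have ih := ol2_eq_stC γf u2f u3f t hm s (le_of_lt (Nat.lt_of_succ_le hs))
    obtain ⟨e1, e2, e3⟩ := hm s (Nat.lt_of_succ_le hs)
    rw [stC_succ]
    show (_, _) = (_, _)
    rw [show S.ol2 γf u2f u3f x0 w s = stC S Z3 rho3 g3 τ x0 w s from ih, e1, e2, e3]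

end Pres2
namespace Pres2

variable (S : Pres2) (Z3 : ℕ → Type) (rho3 : ∀ ℓ, S.Z2 ℓ → Z3 ℓ)
  (g3 : ∀ t : ℕ, (∀ ℓ : Fin t, Z3 (ℓ.1+1)) → S.U3 t)
  (τ : S.Sig) (x0 : S.X 0) (w : ∀ s, S.W s)

lemma stC_mem_P2 (hx0 : x0 ∈ S.X0) (t : ℕ) :
    stC S Z3 rho3 g3 τ x0 w t ∈
      S.P2 t (hzC S Z3 rho3 g3 τ x0 w t) (hgC S Z3 rho3 g3 τ x0 w t)
        (huC S Z3 rho3 g3 τ x0 w t)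
        (S.u3ofZ Z3 rho3 g3 t (hzC S Z3 rho3 g3 τ x0 w t)) := by
  classical
  set γf : ∀ s, Set (S.X s) → S.U1 s := fun s =>
    if h : s < t then (thC S Z3 rho3 g3 τ x0 w s).1
    else fun _ => Classical.choice (S.U1ne s) with hγf
  set u2f : ∀ s, S.U2 s := fun s =>
    if h : s < t then (thC S Z3 rho3 g3 τ x0 w s).2
    else Classical.choice (S.U2ne s) with hu2f
  set u3f : ∀ s, S.U3 s := fun s =>
    if h : s < t then u3C S Z3 rho3 g3 τ x0 w s
    else Classical.choice (S.U3ne s) with hu3f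
  have hm : ∀ s, s < t → γf s = (thC S Z3 rho3 g3 τ x0 w s).1 ∧
      u2f s = (thC S Z3 rho3 g3 τ x0 w s).2 ∧ u3f s = u3C S Z3 rho3 g3 τ x0 w s := by
    intro s hs
    exact ⟨dif_pos hs, dif_pos hs, dif_pos hs⟩
  have hol := ol2_eq_stC S Z3 rho3 g3 τ x0 w γf u2f u3f t hm
  refine ⟨γf, u2f, u3f, ?_, x0, hx0, w, ?_, hol t le_rfl⟩
  · intro ℓ
    obtain ⟨e1, e2, e3⟩ := hm ℓ.1 ℓ.2
    refine ⟨?_, ?_, ?_⟩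
    · rw [e1, hgC_lt]
    · rw [e2, huC_lt]
    · rw [e3, u3ofZ_lt]
  · intro ℓ
    obtain ⟨e1, e2, e3⟩ := hm ℓ.1 ℓ.2
    rw [hol ℓ.1 (le_of_lt ℓ.2), e1, e2, e3, hzC_lt]
    rfl

end Pres2
namespace Pres2

variable (S : Pres2) (Z3 : ℕ → Type) (rho3 : ∀ ℓ, S.Z2 ℓ → Z3 ℓ)
  (g3 : ∀ t : ℕ, (∀ ℓ : Fin t, Z3 (ℓ.1+1)) → S.U3 t)
  (τ : S.Sig) (x0 : S.X 0) (w : ∀ s, S.W s)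

lemma P2_realize (t : ℕ) (q : S.X t × Set (S.X t))
    (hq : q ∈ S.P2 t (hzC S Z3 rho3 g3 τ x0 w t) (hgC S Z3 rho3 g3 τ x0 w t)
      (huC S Z3 rho3 g3 τ x0 w t)
      (S.u3ofZ Z3 rho3 g3 t (hzC S Z3 rho3 g3 τ x0 w t))) :
    ∃ x0', x0' ∈ S.X0 ∧ ∃ w',
      stC S Z3 rho3 g3 τ x0' w' t = q ∧
      hzC S Z3 rho3 g3 τ x0' w' t = hzC S Z3 rho3 g3 τ x0 w t ∧
      hgC S Z3 rho3 g3 τ x0' w' t = hgC S Z3 rho3 g3 τ x0 w t ∧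
      huC S Z3 rho3 g3 τ x0' w' t = huC S Z3 rho3 g3 τ x0 w t := by
  obtain ⟨γf, u2f, u3f, hpre, x0', hx0', w', hobs, hol⟩ := hq
  have key : ∀ s, s ≤ t →
      (stC S Z3 rho3 g3 τ x0' w' s = S.ol2 γf u2f u3f x0' w' s) ∧
      (∀ ℓ : Fin s, hzC S Z3 rho3 g3 τ x0' w' s ℓ = zC S Z3 rho3 g3 τ x0 w ℓ.1) ∧
      (∀ ℓ : Fin s, hgC S Z3 rho3 g3 τ x0' w' s ℓ = (thC S Z3 rho3 g3 τ x0 w ℓ.1).1) ∧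
      (∀ ℓ : Fin s, huC S Z3 rho3 g3 τ x0' w' s ℓ = (thC S Z3 rho3 g3 τ x0 w ℓ.1).2) := by
    intro s
    induction s with
    | zero => exact fun _ => ⟨rfl, fun ℓ => ℓ.elim0, fun ℓ => ℓ.elim0, fun ℓ => ℓ.elim0⟩
    | succ s ih =>
      intro hs
      have hslt : s < t := Nat.lt_of_succ_le hs
      obtain ⟨hst, hz, hg, hu⟩ := ih (le_of_lt hslt)
      -- the primed histories at time s agree with the unprimed ones
      have ez : hzC S Z3 rho3 g3 τ x0' w' s = hzC S Z3 rho3 g3 τ x0 w s :=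
        funext fun ℓ => (hz ℓ).trans (hzC_lt S Z3 rho3 g3 τ x0 w s ℓ).symm
      have eg : hgC S Z3 rho3 g3 τ x0' w' s = hgC S Z3 rho3 g3 τ x0 w s :=
        funext fun ℓ => (hg ℓ).trans (hgC_lt S Z3 rho3 g3 τ x0 w s ℓ).symm
      have eu : huC S Z3 rho3 g3 τ x0' w' s = huC S Z3 rho3 g3 τ x0 w s :=
        funext fun ℓ => (hu ℓ).trans (huC_lt S Z3 rho3 g3 τ x0 w s ℓ).symm
      have eθ : thC S Z3 rho3 g3 τ x0' w' s = thC S Z3 rho3 g3 τ x0 w s := by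
        unfold thC; rw [ez, eg, eu]
      have eu3 : u3C S Z3 rho3 g3 τ x0' w' s = u3C S Z3 rho3 g3 τ x0 w s := by
        unfold u3C; rw [ez]
      obtain ⟨f1, f2, f3⟩ := hpre ⟨s, hslt⟩
      have hγf : γf s = (thC S Z3 rho3 g3 τ x0 w s).1 :=
        f1.trans (hgC_lt S Z3 rho3 g3 τ x0 w t ⟨s, hslt⟩)
      have hu2f : u2f s = (thC S Z3 rho3 g3 τ x0 w s).2 :=
        f2.trans (huC_lt S Z3 rho3 g3 τ x0 w t ⟨s, hslt⟩)
      have hu3f : u3f s = u3C S Z3 rho3 g3 τ x0 w s :=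
        f3.trans (u3ofZ_lt S Z3 rho3 g3 τ x0 w t ⟨s, hslt⟩)
      have ezc : zC S Z3 rho3 g3 τ x0' w' s =
          S.h2 s (S.ol2 γf u2f u3f x0' w' s).1
            (γf s (S.ol2 γf u2f u3f x0' w' s).2) (u2f s) (u3f s) := by
        unfold zC
        rw [eθ, eu3, hst, hγf, hu2f, hu3f]
      have hzs : zC S Z3 rho3 g3 τ x0' w' s = zC S Z3 rho3 g3 τ x0 w s := by
        rw [ezc, hobs ⟨s, hslt⟩, hzC_lt]
      refine ⟨?_, ?_, ?_, ?_⟩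
      · rw [stC_succ]
        show _ = (_, _)
        rw [hst, eθ, eu3, hγf, hu2f, hu3f]
      · intro ℓ
        rw [hzC_succ]
        induction ℓ using Fin.lastCases with
        | last => rw [Fin.snoc_last]; exact hzs
        | cast i => rw [Fin.snoc_castSucc]; exact hz i
      · intro ℓ
        rw [hgC_succ]
        induction ℓ using Fin.lastCases with
        | last => rw [Fin.snoc_last]; exact congrArg Prod.fst eθ
        | cast i => rw [Fin.snoc_castSucc]; exact hg i
      · intro ℓ
        rw [huC_succ]
        induction ℓ using Fin.lastCases with
        | last => rw [Fin.snoc_last]; exact congrArg Prod.snd eθ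
        | cast i => rw [Fin.snoc_castSucc]; exact hu i
  obtain ⟨hst, hz, hg, hu⟩ := key t le_rfl
  exact ⟨x0', hx0', w', hst.trans hol,
    funext fun ℓ => (hz ℓ).trans (hzC_lt S Z3 rho3 g3 τ x0 w t ℓ).symm,
    funext fun ℓ => (hg ℓ).trans (hgC_lt S Z3 rho3 g3 τ x0 w t ℓ).symm,
    funext fun ℓ => (hu ℓ).trans (huC_lt S Z3 rho3 g3 τ x0 w t ℓ).symm⟩

end Pres2
namespace Pres2

variable (S : Pres2) (Z3 : ℕ → Type) (rho3 : ∀ ℓ, S.Z2 ℓ → Z3 ℓ)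
  (g3 : ∀ t : ℕ, (∀ ℓ : Fin t, Z3 (ℓ.1+1)) → S.U3 t)

lemma u3ofZ_snoc (t : ℕ) (z : ∀ ℓ : Fin t, S.Z2 (ℓ.1+1)) (a : S.Z2 (t+1)) :
    S.u3ofZ Z3 rho3 g3 (t+1)
      (Fin.snoc (α := fun ℓ : Fin (t+1) => S.Z2 (ℓ.1+1)) z a) =
    Fin.snoc (α := fun ℓ : Fin (t+1) => S.U3 ℓ.1) (S.u3ofZ Z3 rho3 g3 t z)
      (g3 t (fun j => rho3 (j.1+1) (z j))) := by
  funext ℓ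
  induction ℓ using Fin.lastCases with
  | last =>
    rw [Fin.snoc_last]
    unfold u3ofZ
    congr 1
    funext j
    congr 1
    exact Fin.snoc_castSucc (α := fun ℓ : Fin (t+1) => S.Z2 (ℓ.1+1)) a z ⟨j.1, lt_of_lt_of_eq j.2 (Fin.val_last t)⟩
  | cast i =>
    rw [Fin.snoc_castSucc]
    unfold u3ofZ
    congr 1
    funext j
    congr 1
    exact Fin.snoc_castSucc (α := fun ℓ : Fin (t+1) => S.Z2 (ℓ.1+1)) a z ⟨j.1, j.2.trans i.2⟩

lemma P2_snoc (t : ℕ) (z : ∀ ℓ : Fin t, S.Z2 (ℓ.1+1))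
    (γ : ∀ ℓ : Fin t, Set (S.X ℓ.1) → S.U1 ℓ.1) (u2 : ∀ ℓ : Fin t, S.U2 ℓ.1)
    (u3 : ∀ ℓ : Fin t, S.U3 ℓ.1) (a : S.Z2 (t+1))
    (gt : Set (S.X t) → S.U1 t) (ut : S.U2 t) (u3t : S.U3 t) :
    S.P2 (t+1) (Fin.snoc (α := fun ℓ : Fin (t+1) => S.Z2 (ℓ.1+1)) z a)
      (Fin.snoc (α := fun ℓ : Fin (t+1) => Set (S.X ℓ.1) → S.U1 ℓ.1) γ gt)
      (Fin.snoc (α := fun ℓ : Fin (t+1) => S.U2 ℓ.1) u2 ut)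
      (Fin.snoc (α := fun ℓ : Fin (t+1) => S.U3 ℓ.1) u3 u3t) =
    {q | ∃ p ∈ S.P2 t z γ u2 u3, ∃ wt : S.W t,
       S.h2 t p.1 (gt p.2) ut u3t = a ∧
       q = (S.f t p.1 (gt p.2) ut u3t wt,
            S.ftil1 t p.2 (gt p.2, ut, u3t) (S.h1 t p.1 (gt p.2) ut u3t))} := by
  classical
  ext q
  constructor
  · rintro ⟨γf, u2f, u3f, hpre, x0, hx0, w, hobs, hol⟩
    have hγt : γf t = gt := by
      have h := (hpre (Fin.last t)).1
      rwa [Fin.snoc_last] at h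
    have hu2t : u2f t = ut := by
      have h := (hpre (Fin.last t)).2.1
      rwa [Fin.snoc_last] at h
    have hu3t : u3f t = u3t := by
      have h := (hpre (Fin.last t)).2.2
      rwa [Fin.snoc_last] at h
    refine ⟨S.ol2 γf u2f u3f x0 w t, ⟨γf, u2f, u3f, ?_, x0, hx0, w, ?_, rfl⟩,
      w t, ?_, ?_⟩
    · intro ℓ
      have h := hpre ℓ.castSucc
      rwa [Fin.snoc_castSucc, Fin.snoc_castSucc, Fin.snoc_castSucc] at h
    · intro ℓ
      have h := hobs ℓ.castSucc
      rwa [Fin.snoc_castSucc] at h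
    · have h := hobs (Fin.last t)
      rw [Fin.snoc_last] at h
      rw [← hγt, ← hu2t, ← hu3t]
      exact h
    · rw [← hol, ← hγt, ← hu2t, ← hu3t]
      rfl
  · rintro ⟨p, ⟨γf, u2f, u3f, hpre, x0, hx0, w, hobs, hol⟩, wt, ha, hq⟩
    refine ⟨Function.update γf t gt, Function.update u2f t ut,
      Function.update u3f t u3t, ?_, x0, hx0, Function.update w t wt, ?_, ?_⟩
    case _ =>
      intro ℓ
      induction ℓ using Fin.lastCases with
      | last =>
        refine ⟨?_, ?_, ?_⟩ <;>
          rw [Fin.snoc_last] <;>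
          exact Function.update_self t _ _
      | cast i =>
        have h := hpre i
        refine ⟨?_, ?_, ?_⟩ <;> rw [Fin.snoc_castSucc] <;>
          simp only [Fin.coe_castSucc]
        · rw [Function.update_of_ne (Nat.ne_of_lt i.2)]; exact h.1
        · rw [Function.update_of_ne (Nat.ne_of_lt i.2)]; exact h.2.1
        · rw [Function.update_of_ne (Nat.ne_of_lt i.2)]; exact h.2.2
    all_goals
      have hol' : ∀ s, s ≤ t →
          S.ol2 (Function.update γf t gt) (Function.update u2f t ut)
            (Function.update u3f t u3t) x0 (Function.update w t wt) s =
          S.ol2 γf u2f u3f x0 w s := by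
        intro s hs
        refine ol2_congr S x0 _ _ _ _ _ _ _ _ s (fun s' hs' => ?_)
        have hne : s' ≠ t := Nat.ne_of_lt (lt_of_lt_of_le hs' hs)
        exact ⟨Function.update_of_ne hne _ _, Function.update_of_ne hne _ _,
          Function.update_of_ne hne _ _, Function.update_of_ne hne _ _⟩
    case _ =>
      intro ℓ
      induction ℓ using Fin.lastCases with
      | last =>
        simp only [Fin.snoc_last, Fin.val_last]
        rw [hol' t le_rfl, hol,
          Function.update_self, Function.update_self, Function.update_self]
        exact ha
      | cast i =>
        rw [Fin.snoc_castSucc]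
        simp only [Fin.coe_castSucc]
        rw [hol' i.1 (le_of_lt i.2),
          Function.update_of_ne (Nat.ne_of_lt i.2),
          Function.update_of_ne (Nat.ne_of_lt i.2),
          Function.update_of_ne (Nat.ne_of_lt i.2)]
        exact hobs i
    case _ =>
      show (_, _) = q
      rw [hol' t le_rfl, hol, Function.update_self, Function.update_self,
        Function.update_self, Function.update_self, hq]

end Pres2
namespace Pres2

variable (S : Pres2) (Z3 : ℕ → Type) (rho3 : ∀ ℓ, S.Z2 ℓ → Z3 ℓ)
  (g3 : ∀ t : ℕ, (∀ ℓ : Fin t, Z3 (ℓ.1+1)) → S.U3 t)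

/-- `(Q, v)` is a reachable pair of (information state, `ρ³`-observation
history) for the strategy `σ`. -/
def Good (σ : S.Sig) (t : ℕ) (Q : Set (S.X t × Set (S.X t)))
    (v : ∀ ℓ : Fin t, Z3 (ℓ.1+1)) : Prop :=
  ∃ x0, x0 ∈ S.X0 ∧ ∃ w : ∀ s, S.W s,
    S.P2 t (hzC S Z3 rho3 g3 σ x0 w t) (hgC S Z3 rho3 g3 σ x0 w t)
      (huC S Z3 rho3 g3 σ x0 w t)
      (S.u3ofZ Z3 rho3 g3 t (hzC S Z3 rho3 g3 σ x0 w t)) = Q ∧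
    (fun ℓ : Fin t => rho3 (ℓ.1+1) (hzC S Z3 rho3 g3 σ x0 w t ℓ)) = v

open Classical in
/-- The structured decision rule obtained from `σ` by replaying `σ` on a
canonical representative history with the given information state. -/
noncomputable def phi (σ : S.Sig) : ∀ t, Set (S.X t × Set (S.X t)) →
    (∀ ℓ : Fin t, Z3 (ℓ.1+1)) → (Set (S.X t) → S.U1 t) × S.U2 t :=
  fun t Q v =>
    if h : Good S Z3 rho3 g3 σ t Q v then
      σ t (hzC S Z3 rho3 g3 σ h.choose h.choose_spec.2.choose t)
        (hgC S Z3 rho3 g3 σ h.choose h.choose_spec.2.choose t)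
        (huC S Z3 rho3 g3 σ h.choose h.choose_spec.2.choose t)
    else (fun _ => Classical.choice (S.U1ne t), Classical.choice (S.U2ne t))

/-- The structured strategy associated with `σ`. -/
noncomputable def sig' (σ : S.Sig) : S.Sig :=
  fun t z γ u2 =>
    phi S Z3 rho3 g3 σ t (S.P2 t z γ u2 (S.u3ofZ Z3 rho3 g3 t z))
      (fun ℓ => rho3 (ℓ.1+1) (z ℓ))

lemma sig'_structured (σ : S.Sig) :
    S.Structured2 Z3 rho3 g3 (sig' S Z3 rho3 g3 σ) :=
  ⟨phi S Z3 rho3 g3 σ, fun _ _ _ _ => rfl⟩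

lemma inv (σ : S.Sig) (x0 : S.X 0) (hx0 : x0 ∈ S.X0) (w : ∀ s, S.W s) :
    ∀ t, Good S Z3 rho3 g3 σ t
      (S.P2 t (hzC S Z3 rho3 g3 (sig' S Z3 rho3 g3 σ) x0 w t)
        (hgC S Z3 rho3 g3 (sig' S Z3 rho3 g3 σ) x0 w t)
        (huC S Z3 rho3 g3 (sig' S Z3 rho3 g3 σ) x0 w t)
        (S.u3ofZ Z3 rho3 g3 t (hzC S Z3 rho3 g3 (sig' S Z3 rho3 g3 σ) x0 w t)))
      (fun ℓ => rho3 (ℓ.1+1) (hzC S Z3 rho3 g3 (sig' S Z3 rho3 g3 σ) x0 w t ℓ))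
  | 0 => by
    refine ⟨x0, hx0, w, ?_, ?_⟩
    · have e1 : hzC S Z3 rho3 g3 σ x0 w 0 =
          hzC S Z3 rho3 g3 (sig' S Z3 rho3 g3 σ) x0 w 0 :=
        funext fun i => i.elim0
      have e2 : hgC S Z3 rho3 g3 σ x0 w 0 =
          hgC S Z3 rho3 g3 (sig' S Z3 rho3 g3 σ) x0 w 0 :=
        funext fun i => i.elim0
      have e3 : huC S Z3 rho3 g3 σ x0 w 0 =
          huC S Z3 rho3 g3 (sig' S Z3 rho3 g3 σ) x0 w 0 :=
        funext fun i => i.elim0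
      rw [e1, e2, e3]
    · exact funext fun i => i.elim0
  | t+1 => by
    set σ' := sig' S Z3 rho3 g3 σ with hσ'
    have h := inv σ x0 hx0 w t
    -- the canonical representative chosen by `phi`
    set xr := h.choose with hxr
    have hrx : xr ∈ S.X0 := h.choose_spec.1
    set wr := h.choose_spec.2.choose with hwr
    have hQr := h.choose_spec.2.choose_spec.1
    have hvr := h.choose_spec.2.choose_spec.2
    -- the action taken by σ' at time t equals the action of σ at the rep
    have eθ : thC S Z3 rho3 g3 σ' x0 w t =
        σ t (hzC S Z3 rho3 g3 σ xr wr t) (hgC S Z3 rho3 g3 σ xr wr t)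
          (huC S Z3 rho3 g3 σ xr wr t) := by
      show phi S Z3 rho3 g3 σ t _ _ = _
      rw [phi, dif_pos h]
    -- realize the current σ'-state inside the rep history
    have hmem := stC_mem_P2 S Z3 rho3 g3 σ' x0 w hx0 t
    rw [← hQr] at hmem
    obtain ⟨x2, hx2, w2, hst2, hz2, hg2, hu2⟩ :=
      P2_realize S Z3 rho3 g3 σ xr wr t _ hmem
    -- extend the disturbance with the current one
    set w3 := Function.update w2 t (w t) with hw3
    have hcl : S.cl2 Z3 rho3 g3 σ x2 w3 t = S.cl2 Z3 rho3 g3 σ x2 w2 t :=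
      cl2_w_congr S Z3 rho3 g3 σ x2 w3 w2 t
        (fun s hs => Function.update_of_ne (Nat.ne_of_lt hs) _ _)
    have est3 : stC S Z3 rho3 g3 σ x2 w3 t = stC S Z3 rho3 g3 σ' x0 w t := by
      unfold stC; rw [hcl]; exact hst2
    have ez3 : hzC S Z3 rho3 g3 σ x2 w3 t = hzC S Z3 rho3 g3 σ xr wr t := by
      unfold hzC; rw [hcl]; exact hz2
    have eg3 : hgC S Z3 rho3 g3 σ x2 w3 t = hgC S Z3 rho3 g3 σ xr wr t := by
      unfold hgC; rw [hcl]; exact hg2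
    have eu3 : huC S Z3 rho3 g3 σ x2 w3 t = huC S Z3 rho3 g3 σ xr wr t := by
      unfold huC; rw [hcl]; exact hu2
    have eth3 : thC S Z3 rho3 g3 σ x2 w3 t = thC S Z3 rho3 g3 σ' x0 w t := by
      unfold thC; rw [ez3, eg3, eu3]; exact eθ.symm
    have evr : (fun ℓ : Fin t => rho3 (ℓ.1+1) (hzC S Z3 rho3 g3 σ xr wr t ℓ)) =
        (fun ℓ : Fin t => rho3 (ℓ.1+1) (hzC S Z3 rho3 g3 σ' x0 w t ℓ)) := hvr
    have eu33 : u3C S Z3 rho3 g3 σ x2 w3 t = u3C S Z3 rho3 g3 σ' x0 w t := by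
      unfold u3C; rw [ez3]; exact congrArg (g3 t) evr
    have ezc : zC S Z3 rho3 g3 σ x2 w3 t = zC S Z3 rho3 g3 σ' x0 w t := by
      unfold zC; rw [est3, eth3, eu33]
    have ew3 : w3 t = w t := Function.update_self t _ _
    refine ⟨x2, hx2, w3, ?_, ?_⟩
    · -- equality of the P2 sets at time t+1
      rw [hzC_succ, hgC_succ, huC_succ, hzC_succ, hgC_succ, huC_succ,
        u3ofZ_snoc, u3ofZ_snoc, ezc, eth3, P2_snoc, P2_snoc]
      rw [show (fun j : Fin t => rho3 (j.1+1) (hzC S Z3 rho3 g3 σ x2 w3 t j)) =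
          (fun j : Fin t => rho3 (j.1+1) (hzC S Z3 rho3 g3 σ' x0 w t j)) from by
        rw [ez3]; exact evr]
      rw [show S.P2 t (hzC S Z3 rho3 g3 σ x2 w3 t) (hgC S Z3 rho3 g3 σ x2 w3 t)
            (huC S Z3 rho3 g3 σ x2 w3 t)
            (S.u3ofZ Z3 rho3 g3 t (hzC S Z3 rho3 g3 σ x2 w3 t)) =
          S.P2 t (hzC S Z3 rho3 g3 σ' x0 w t) (hgC S Z3 rho3 g3 σ' x0 w t)
            (huC S Z3 rho3 g3 σ' x0 w t)
            (S.u3ofZ Z3 rho3 g3 t (hzC S Z3 rho3 g3 σ' x0 w t)) from by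
        rw [ez3, eg3, eu3]; exact hQr]
    · -- equality of the ρ³-histories at time t+1
      funext ℓ
      rw [hzC_succ, hzC_succ]
      induction ℓ using Fin.lastCases with
      | last => rw [Fin.snoc_last, Fin.snoc_last, ezc]
      | cast i =>
        rw [Fin.snoc_castSucc, Fin.snoc_castSucc, ez3]
        exact congrFun evr i

end Pres2
/-- in the subsystem-2 prescription system with a fixed
subsystem-3 strategy, it is without loss of optimality to restrict to
strategies of the form `θ_t = φ_t(P²_t, ρ³(z²_1), …, ρ³(z²_t))`. -/
theorem stmt8 (S : Pres2) (Z3 : ℕ → Type) [∀ ℓ, Finite (Z3 ℓ)]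
    (rho3 : ∀ ℓ, S.Z2 ℓ → Z3 ℓ)
    (g3 : ∀ t : ℕ, (∀ ℓ : Fin t, Z3 (ℓ.1+1)) → S.U3 t)
    (dT : S.X S.T → ℝ) :
    (sInf {r | ∃ σ : S.Sig, r = S.J2 Z3 rho3 g3 dT σ} =
      sInf {r | ∃ σ : S.Sig, S.Structured2 Z3 rho3 g3 σ ∧ r = S.J2 Z3 rho3 g3 dT σ}) ∧
    ∀ σ : S.Sig, ∃ σ' : S.Sig, S.Structured2 Z3 rho3 g3 σ' ∧
      S.J2 Z3 rho3 g3 dT σ' ≤ S.J2 Z3 rho3 g3 dT σ := by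
  classical
  haveI := S.Xfin S.T
  haveI := S.Xne S.T
  obtain ⟨xI, hxI⟩ := S.X0ne
  set wI : ∀ s, S.W s := fun s => Classical.choice (S.Wne s) with hwI
  -- the cost set of a strategy
  set CS : S.Sig → Set ℝ := fun τ =>
    {r | ∃ x0 ∈ S.X0, ∃ w : ∀ s, S.W s, r = dT (S.cl2 Z3 rho3 g3 τ x0 w S.T).1.1}
    with hCS
  have hJ : ∀ τ : S.Sig, S.J2 Z3 rho3 g3 dT τ = sSup (CS τ) := fun τ => rfl
  have hsub : ∀ τ : S.Sig, CS τ ⊆ Set.range dT := by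
    rintro τ r ⟨x0, _, w, rfl⟩
    exact ⟨_, rfl⟩
  have hbdd : ∀ τ : S.Sig, BddAbove (CS τ) := fun τ =>
    ((Set.finite_range dT).subset (hsub τ)).bddAbove
  have hne : ∀ τ : S.Sig, (CS τ).Nonempty := fun τ =>
    ⟨dT (S.cl2 Z3 rho3 g3 τ xI wI S.T).1.1, xI, hxI, wI, rfl⟩
  -- Part 2: the structured strategy sig' σ is no worse than σ
  have main : ∀ σ : S.Sig, ∃ σ' : S.Sig, S.Structured2 Z3 rho3 g3 σ' ∧
      S.J2 Z3 rho3 g3 dT σ' ≤ S.J2 Z3 rho3 g3 dT σ := by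
    intro σ
    refine ⟨Pres2.sig' S Z3 rho3 g3 σ, Pres2.sig'_structured S Z3 rho3 g3 σ, ?_⟩
    rw [hJ, hJ]
    refine csSup_le (hne _) ?_
    rintro r ⟨x0, hx0, w, rfl⟩
    -- realize this closed-loop cost under σ
    have h := Pres2.inv S Z3 rho3 g3 σ x0 hx0 w S.T
    have hQr := h.choose_spec.2.choose_spec.1
    have hmem := Pres2.stC_mem_P2 S Z3 rho3 g3
      (Pres2.sig' S Z3 rho3 g3 σ) x0 w hx0 S.T
    rw [← hQr] at hmem
    obtain ⟨x2, hx2, w2, hst2, -, -, -⟩ :=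
      Pres2.P2_realize S Z3 rho3 g3 σ h.choose h.choose_spec.2.choose S.T _ hmem
    have : dT (S.cl2 Z3 rho3 g3 (Pres2.sig' S Z3 rho3 g3 σ) x0 w S.T).1.1 =
        dT (S.cl2 Z3 rho3 g3 σ x2 w2 S.T).1.1 := by
      show dT (Pres2.stC S Z3 rho3 g3 _ x0 w S.T).1 =
        dT (Pres2.stC S Z3 rho3 g3 σ x2 w2 S.T).1
      rw [hst2]
    rw [this]
    exact le_csSup (hbdd σ) ⟨x2, hx2, w2, rfl⟩
  refine ⟨?_, main⟩
  -- Part 1: equality of the infima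
  set A : Set ℝ := {r | ∃ σ : S.Sig, r = S.J2 Z3 rho3 g3 dT σ} with hA
  set B : Set ℝ := {r | ∃ σ : S.Sig, S.Structured2 Z3 rho3 g3 σ ∧
    r = S.J2 Z3 rho3 g3 dT σ} with hB
  have hBA : B ⊆ A := by rintro r ⟨σ, -, rfl⟩; exact ⟨σ, rfl⟩
  -- a uniform lower bound
  obtain ⟨m, hm⟩ := (Set.finite_range dT).bddBelow
  have lbA : ∀ r ∈ A, m ≤ r := by
    rintro r ⟨σ, rfl⟩
    have hc : dT (S.cl2 Z3 rho3 g3 σ xI wI S.T).1.1 ∈ CS σ := ⟨xI, hxI, wI, rfl⟩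
    calc m ≤ dT (S.cl2 Z3 rho3 g3 σ xI wI S.T).1.1 := hm ⟨_, rfl⟩
    _ ≤ sSup (CS σ) := le_csSup (hbdd σ) hc
    _ = S.J2 Z3 rho3 g3 dT σ := (hJ σ).symm
  have hbddA : BddBelow A := ⟨m, lbA⟩
  have hbddB : BddBelow B := ⟨m, fun r hr => lbA r (hBA hr)⟩
  -- a default strategy
  set σ0 : S.Sig := fun t _ _ _ =>
    (fun _ => Classical.choice (S.U1ne t), Classical.choice (S.U2ne t)) with hσ0
  obtain ⟨σ1, hσ1, -⟩ := main σ0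
  have hAne : A.Nonempty := ⟨_, σ0, rfl⟩
  have hBne : B.Nonempty := ⟨_, σ1, hσ1, rfl⟩
  refine le_antisymm (csInf_le_csInf hbddA hBne hBA) ?_
  refine le_csInf hAne ?_
  rintro a ⟨σ, rfl⟩
  obtain ⟨σ', hσ', hle⟩ := main σ
  exact le_trans (csInf_le hbddB ⟨σ', hσ', rfl⟩) hle
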